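/- For every integer r ≥ 2, the graph B_{2r,2r−1} has no perfect matching, every maximum matching of B_{2r,2r−1} leaves at least two vertices unsaturated, and for every maximum matching M of B_{2r,2r−1} any two distinct M-unsaturated vertices have a common neighbor. -/

import Mathlib

/-- A matching `M` of `G` is maximum if no matching of `G` has more edges. -/
def SimpleGraph.IsMaximumMatching {α : Type*} (G : SimpleGraph α) (M : G.Subgraph) : Prop :=
  M.IsMatching ∧ ∀ M' : G.Subgraph, M'.IsMatching → M'.edgeSet.ncard ≤ M.edgeSet.ncard

/-- The bipartite graph `B_{2r,2r-1}`: the left part `U` consists of the vertices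
`u_{(i,j)}` for `i < j` (encoded as `Sum.inl ⟨(i, j), hij⟩`), the right part `V` consists
of the vertices `v_k^{(i)}` (encoded as `Sum.inr (i, k)`), and `u_{(i,j)}` is joined
to `v_k^{(i)}` and `v_k^{(j)}` for all `k`. -/
def BGraph (r : ℕ) :
    SimpleGraph ({p : Fin (2 * r) × Fin (2 * r) // p.1 < p.2} ⊕ Fin (2 * r) × Fin r) where
  Adj a b :=
    match a, b with
    | .inl u, .inr v => v.1 = u.1.1 ∨ v.1 = u.1.2
    | .inr v, .inl u => v.1 = u.1.1 ∨ v.1 = u.1.2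
    | _, _ => False
  symm := ⟨by rintro (u | v) (u' | v') h <;> exact h⟩
  loopless := ⟨by rintro (u | v) h <;> exact h⟩

/-!
Every matching of a bipartite graph has as many edges as it saturates vertices on either side.
Since `|V| = 2r² = |U| + r`, every matching therefore leaves at least `r` vertices of `V`
unsaturated. Orienting each pair `{i, j}` round-robin, so that each index receives at most `r`
pairs, gives a matching saturating `U`; hence every maximum matching saturates `U`, its unsaturated
vertices lie in `V`, and any two vertices `v_k^{(i)}, v_l^{(j)}` of `V` have a common neighbour
`u_{(i,j)}` (or `u_{(i,j')}` with `j' ≠ i` when `i = j`).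
-/

namespace SimpleGraph

variable {V : Type*} {G : SimpleGraph V} {M : G.Subgraph} {s t : Set V}

theorem Subgraph.IsMatching.ncard_edgeSet_eq_ncard_verts_inter (hG : G.IsBipartiteWith s t)
    (hM : M.IsMatching) : M.edgeSet.ncard = (M.verts ∩ s).ncard := by
  symm
  refine Set.ncard_congr (fun v hv => (hM.toEdge ⟨v, hv.1⟩ : Sym2 V)) (fun v hv => Subtype.prop _)
    ?_ ?_
  · intro v w hv hw hvw
    obtain ⟨v', hv'⟩ := hM hv.1
    obtain ⟨w', hw'⟩ := hM hw.1
    simp only [hM.toEdge_eq_of_adj hv'.1, hM.toEdge_eq_of_adj hw'.1, Sym2.eq_iff] at hvw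
    rcases hvw with ⟨rfl, -⟩ | ⟨rfl, -⟩
    · rfl
    · exact absurd (hG.mem_of_mem_adj hw.2 (M.adj_sub hw'.1)) (hG.disjoint.notMem_of_mem_left hv.2)
  · intro e he
    induction e using Sym2.ind with
    | _ x y =>
    rw [Subgraph.mem_edgeSet] at he
    rcases hG.mem_of_adj (M.adj_sub he) with ⟨hx, -⟩ | ⟨-, hy⟩
    · exact ⟨x, ⟨M.edge_vert he, hx⟩, by simp [hM.toEdge_eq_of_adj he]⟩
    · exact ⟨y, ⟨M.edge_vert he.symm, hy⟩, by simp [hM.toEdge_eq_of_adj he.symm, Sym2.eq_swap]⟩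

theorem Subgraph.IsMatching.ncard_le_ncard_add_ncard_diff_verts [Finite V]
    (hG : G.IsBipartiteWith s t) (hM : M.IsMatching) :
    t.ncard ≤ s.ncard + (t \ M.verts).ncard := by
  have hts : (t ∩ M.verts).ncard = (M.verts ∩ s).ncard := by
    rw [Set.inter_comm, ← hM.ncard_edgeSet_eq_ncard_verts_inter hG,
      hM.ncard_edgeSet_eq_ncard_verts_inter hG.symm]
  calc t.ncard = (t ∩ M.verts).ncard + (t \ M.verts).ncard :=
        (Set.ncard_inter_add_ncard_sdiff_eq_ncard _ _).symm
    _ ≤ s.ncard + (t \ M.verts).ncard := by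
      rw [hts]
      exact Nat.add_le_add_right (Set.ncard_le_ncard Set.inter_subset_right) _

theorem IsMaximumMatching.subset_verts [Finite V] (hG : G.IsBipartiteWith s t)
    (hM : G.IsMaximumMatching M) {M₀ : G.Subgraph} (hM₀ : M₀.IsMatching) (hs : s ⊆ M₀.verts) :
    s ⊆ M.verts := by
  have hle := hM.2 M₀ hM₀
  rw [hM₀.ncard_edgeSet_eq_ncard_verts_inter hG, hM.1.ncard_edgeSet_eq_ncard_verts_inter hG,
    Set.inter_eq_right.2 hs] at hle
  exact Set.inter_eq_right.1 (Set.eq_of_subset_of_ncard_le Set.inter_subset_right hle)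

theorem exists_isMatching_range_inl_subset_verts {α β : Type*} {G : SimpleGraph (α ⊕ β)}
    (f : α → β) (hf : Function.Injective f) (hadj : ∀ a, G.Adj (.inl a) (.inr (f a))) :
    ∃ M : G.Subgraph, M.IsMatching ∧ Set.range Sum.inl ⊆ M.verts := by
  have hdisj : Disjoint (Set.range (Sum.inl : α → α ⊕ β)) (Set.range (Sum.inr ∘ f)) := by
    rw [Set.disjoint_right]
    rintro _ ⟨b, rfl⟩ ⟨a, h⟩
    simp at h
  obtain ⟨M, hverts, hM⟩ := Subgraph.IsMatching.exists_of_disjoint_sets_of_equiv (G := G) hdisj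
    ((Equiv.ofInjective _ Sum.inl_injective).symm.trans
      (Equiv.ofInjective _ (Sum.inr_injective.comp hf))) (by
        rintro ⟨_, a, rfl⟩
        simpa using hadj a)
  exact ⟨M, hM, hverts ▸ Set.subset_union_left⟩

end SimpleGraph

namespace BGraph

abbrev Left (r : ℕ) := {p : Fin (2 * r) × Fin (2 * r) // p.1 < p.2}

abbrev Right (r : ℕ) := Fin (2 * r) × Fin r

variable {r : ℕ}

@[simp]
theorem adj_inl_inr {u : Left r} {v : Right r} :
    (BGraph r).Adj (.inl u) (.inr v) ↔ v.1 = u.1.1 ∨ v.1 = u.1.2 := Iff.rfl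

theorem isBipartiteWith (r : ℕ) :
    (BGraph r).IsBipartiteWith (Set.range Sum.inl) (Set.range Sum.inr) where
  disjoint := Set.isCompl_range_inl_range_inr.disjoint
  mem_of_adj := by
    rintro (u | v) (u' | v') h
    · exact h.elim
    · exact .inl ⟨⟨u, rfl⟩, ⟨v', rfl⟩⟩
    · exact .inr ⟨⟨v, rfl⟩, ⟨u', rfl⟩⟩
    · exact h.elim

theorem card_right (r : ℕ) : Nat.card (Right r) = Nat.card (Left r) + r := by
  have hleft : Nat.card (Left r) = (2 * r).choose 2 := by
    rw [Nat.card_eq_fintype_card, Fintype.card_subtype, Fintype.card_product_filter_lt,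
      Fintype.card_fin]
  rw [hleft, Nat.card_eq_fintype_card, Fintype.card_prod, Fintype.card_fin, Fintype.card_fin,
    Nat.choose_two_right, Nat.mul_assoc 2 r (2 * r - 1), Nat.mul_div_cancel_left _ two_pos]
  cases r with
  | zero => rfl
  | succ n => rw [show 2 * (n + 1) - 1 = 2 * n + 1 by omega]; ring

theorem le_ncard_range_inr_diff_verts {M : (BGraph r).Subgraph} (hM : M.IsMatching) :
    r ≤ (Set.range Sum.inr \ M.verts).ncard := by
  have := hM.ncard_le_ncard_add_ncard_diff_verts (isBipartiteWith r)
  rw [Set.ncard_range_of_injective Sum.inl_injective,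
    Set.ncard_range_of_injective Sum.inr_injective, card_right] at this
  exact Nat.le_of_add_le_add_left this

/-- Orient the pair `{i, j}` towards the endpoint from which the other one lies `d ≤ r` steps
ahead modulo `2r`, and label it `d - 1`; the pair is recovered from the endpoint and the label. -/
def orient (u : Left r) : Right r :=
  have : (u.1.1 : ℕ) < u.1.2 := u.2
  if h : (u.1.2 : ℕ) ≤ u.1.1 + r then (u.1.1, ⟨u.1.2 - u.1.1 - 1, by omega⟩)
  else (u.1.2, ⟨2 * r - (u.1.2 - u.1.1) - 1, by omega⟩)

theorem adj_orient (u : Left r) : (BGraph r).Adj (.inl u) (.inr (orient u)) := by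
  unfold orient
  split_ifs <;> simp

theorem orient_injective : Function.Injective (orient (r := r)) := by
  rintro ⟨⟨i, j⟩, hij⟩ ⟨⟨i', j'⟩, hij'⟩ h
  have hi : (i : ℕ) < j := hij
  have hi' : (i' : ℕ) < j' := hij'
  have := j.isLt
  have := j'.isLt
  unfold orient at h
  dsimp only at h
  split_ifs at h <;>
    simp only [Prod.mk.injEq, Fin.ext_iff] at h <;>
    · apply Subtype.ext
      simp only [Prod.mk.injEq, Fin.ext_iff]
      omega

theorem exists_common_neighbor_inr (hr : 1 ≤ r) (v w : Right r) :
    ∃ u, (BGraph r).Adj (.inl u) (.inr v) ∧ (BGraph r).Adj (.inl u) (.inr w) := by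
  rcases lt_trichotomy v.1 w.1 with h | h | h
  · exact ⟨⟨(v.1, w.1), h⟩, by simp⟩
  · have : Nontrivial (Fin (2 * r)) := Fin.nontrivial_iff_two_le.2 (by omega)
    obtain ⟨j, hj⟩ := exists_ne v.1
    rcases hj.lt_or_gt with hlt | hgt
    · exact ⟨⟨(j, v.1), hlt⟩, by simp [h]⟩
    · exact ⟨⟨(v.1, j), hgt⟩, by simp [h]⟩
  · exact ⟨⟨(w.1, v.1), h⟩, by simp⟩

theorem exists_eq_inr_of_isMaximumMatching {M : (BGraph r).Subgraph}
    (hM : (BGraph r).IsMaximumMatching M) {x : Left r ⊕ Right r} (hx : ∀ c, ¬ M.Adj x c) :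
    ∃ v, x = .inr v := by
  obtain ⟨M₀, hM₀, hleft⟩ :=
    SimpleGraph.exists_isMatching_range_inl_subset_verts _ orient_injective adj_orient
  rcases x with u | v
  · obtain ⟨c, hc, -⟩ := hM.1 (hM.subset_verts (isBipartiteWith r) hM₀ hleft ⟨u, rfl⟩)
    exact (hx c hc).elim
  · exact ⟨v, rfl⟩

end BGraph

/-- `B_{2r,2r-1}` has no perfect matching, every maximum matching leaves at least two
vertices unsaturated, and for every maximum matching `M`, any two distinct
`M`-unsaturated vertices have a common neighbor. -/
theorem stmt_6 (r : ℕ) (hr : 2 ≤ r) :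
    (¬ ∃ M : (BGraph r).Subgraph, M.IsPerfectMatching) ∧
    (∀ M : (BGraph r).Subgraph, (BGraph r).IsMaximumMatching M →
      ∃ a b, a ≠ b ∧ (∀ c, ¬ M.Adj a c) ∧ (∀ c, ¬ M.Adj b c)) ∧
    (∀ M : (BGraph r).Subgraph, (BGraph r).IsMaximumMatching M →
      ∀ a b, a ≠ b → (∀ c, ¬ M.Adj a c) → (∀ c, ¬ M.Adj b c) →
        ∃ w, (BGraph r).Adj w a ∧ (BGraph r).Adj w b) := by
  refine ⟨?_, ?_, ?_⟩
  · rintro ⟨M, hM⟩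
    have := BGraph.le_ncard_range_inr_diff_verts hM.1
    rw [Set.sdiff_eq_empty.2 fun v _ => hM.2 v, Set.ncard_empty] at this
    omega
  · intro M hM
    obtain ⟨a, ⟨-, ha⟩, b, ⟨-, hb⟩, hab⟩ :=
      (Set.one_lt_ncard).1 (hr.trans (BGraph.le_ncard_range_inr_diff_verts hM.1))
    exact ⟨a, b, hab, fun c hc => ha (M.edge_vert hc), fun c hc => hb (M.edge_vert hc)⟩
  · intro M hM a b _ ha hb
    obtain ⟨v, rfl⟩ := BGraph.exists_eq_inr_of_isMaximumMatching hM ha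
    obtain ⟨w, rfl⟩ := BGraph.exists_eq_inr_of_isMaximumMatching hM hb
    obtain ⟨u, hu⟩ := BGraph.exists_common_neighbor_inr (by omega) v w
    exact ⟨.inl u, hu⟩
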